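/- Let m ≥ 3 and n ≥ 2 be integers, and suppose c is a locating (m+1)-coloring of K_m □ P_n (vertices indexed by pairs (i,j) with i ∈ {1,...,m}, j ∈ {1,...,n}, where the j-th column {(i,j) : 1 ≤ i ≤ m} induces K_m and each row induces P_n). Then for every j with 1 ≤ j ≤ n−1, the color missing from column j differs from the color missing from column j+1; that is, there is no color absent from both column j and column j+1. -/

import Mathlib

/-!
Let `x` be missing from the adjacent columns `a` and `a'`. Every other color occurs in both
columns, so two vertices of the same color, one in each column, are at the same distance (`0` or
`1`) from every color class except the class `X` of `x`; since the coloring is locating, they must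
be at different distances from `X`. Distances in `K_m □ P_n` are the column distance plus one for
a change of row. Take `w ∈ X` in a column nearest to the two columns, at distance `δ` from the
nearer column `a`, in row `r`. Every vertex of column `a` outside row `r` is then at distance
exactly `δ + 1` from `X`. If vertex `r` of column `a'` is at distance `δ + 1` as well, it matches
the vertex of its color in column `a`. Otherwise `X` has a vertex in row `r` at distance `δ` from
column `a'` on the far side, so every vertex of column `a'` outside row `r` is at distance `δ + 1`,
and a color other than `x` and the two colors of row `r` (there are `m + 1 ≥ 4` colors) gives a
matching pair.
-/

open SimpleGraph

/-- The distance from a vertex to a set of vertices. -/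
noncomputable def setDist {V : Type*} (G : SimpleGraph V) (v : V) (S : Set V) : ℕ :=
  sInf (G.dist v '' S)

/-- The color code of a vertex with respect to a `k`-coloring `c`:
the tuple of distances to the color classes. -/
noncomputable def colorCode {V : Type*} (G : SimpleGraph V) {k : ℕ} (c : V → Fin k)
    (v : V) : Fin k → ℕ :=
  fun i => setDist G v (c ⁻¹' {i})

/-- `c` is a locating `k`-coloring of `G`: a proper coloring onto the `k` colors
such that distinct vertices have distinct color codes. -/
def IsLocatingColoring {V : Type*} (G : SimpleGraph V) {k : ℕ} (c : V → Fin k) : Prop :=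
  Function.Surjective c ∧
  (∀ u v : V, G.Adj u v → c u ≠ c v) ∧
  Function.Injective (colorCode G c)

/-- The locating chromatic number: the least `k` admitting a locating `k`-coloring. -/
noncomputable def locatingChromaticNumber {V : Type*} (G : SimpleGraph V) : ℕ :=
  sInf {k : ℕ | ∃ c : V → Fin k, IsLocatingColoring G c}

/-- A vertex is colorful w.r.t. a coloring `c` if every color appears in its
closed neighborhood. -/
def IsColorful {V : Type*} (G : SimpleGraph V) {k : ℕ} (c : V → Fin k) (v : V) : Prop :=
  ∀ i : Fin k, ∃ u : V, (u = v ∨ G.Adj v u) ∧ c u = i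

theorem exists_min_left_or_right {α β : Type*} [LinearOrder β] {s : Set α} (hs : s.Finite)
    (hne : s.Nonempty) (f g : α → β) :
    ∃ w ∈ s, (∀ w' ∈ s, f w ≤ f w' ∧ f w ≤ g w') ∨ (∀ w' ∈ s, g w ≤ g w' ∧ g w ≤ f w') := by
  obtain ⟨w₁, hw₁, hf⟩ := s.exists_min_image f hs hne
  obtain ⟨w₂, hw₂, hg⟩ := s.exists_min_image g hs hne
  rcases le_total (f w₁) (g w₂) with h | h
  · exact ⟨w₁, hw₁, .inl fun w' hw' => ⟨hf w' hw', h.trans (hg w' hw')⟩⟩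
  · exact ⟨w₂, hw₂, .inr fun w' hw' => ⟨hg w' hw', h.trans (hf w' hw')⟩⟩

namespace SimpleGraph

theorem dist_boxProd {α β : Type*} {G : SimpleGraph α} {H : SimpleGraph β}
    (hG : G.Preconnected) (hH : H.Preconnected) (x y : α × β) :
    (G □ H).dist x y = G.dist x.1 y.1 + H.dist x.2 y.2 := by
  rw [dist, edist_boxProd, ← (hG x.1 y.1).coe_dist_eq_edist, ← (hH x.2 y.2).coe_dist_eq_edist]
  rfl

theorem Walk.natDist_le_length {n : ℕ} {a b : Fin n} (p : (pathGraph n).Walk a b) :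
    Nat.dist a b ≤ p.length := by
  induction p with
  | nil => simp [Nat.dist]
  | cons h _ ih =>
    rw [pathGraph_adj] at h
    simp only [Walk.length_cons, Nat.dist] at ih ⊢
    omega

theorem pathGraph_dist {n : ℕ} (a b : Fin n) : (pathGraph n).dist a b = Nat.dist a b := by
  refine le_antisymm ?_ ?_
  · wlog hab : a ≤ b generalizing a b
    · rw [dist_comm, Nat.dist_comm]
      exact this b a (le_of_not_ge hab)
    obtain ⟨k, hk⟩ := Nat.exists_eq_add_of_le (Fin.le_iff_val_le_val.mp hab)
    induction k generalizing b with
    | zero => simp [Fin.ext hk]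
    | succ k ih =>
      let b' : Fin n := ⟨b - 1, by omega⟩
      have hadj : (pathGraph n).Adj b' b := pathGraph_adj.mpr (.inl (by simp [b']; omega))
      calc (pathGraph n).dist a b ≤ (pathGraph n).dist a b' + (pathGraph n).dist b' b :=
            (pathGraph_preconnected n a b').dist_triangle_left b
        _ ≤ Nat.dist a b' + 1 := by
            rw [dist_eq_one_iff_adj.mpr hadj]
            exact Nat.add_le_add_right (ih b' (Fin.le_iff_val_le_val.mpr (by simp [b']; omega))
              (by simp [b']; omega)) 1
        _ = Nat.dist a b := by simp only [Nat.dist, b']; omega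
  · obtain ⟨p, hp⟩ := (pathGraph_preconnected n a b).exists_walk_length_eq_dist
    exact hp ▸ p.natDist_le_length

end SimpleGraph

section SetDist

variable {V : Type*} {G : SimpleGraph V} {v : V} {S : Set V}

theorem setDist_le_dist {w : V} (hw : w ∈ S) : setDist G v S ≤ G.dist v w :=
  Nat.sInf_le ⟨w, hw, rfl⟩

theorem le_setDist {k : ℕ} (hS : S.Nonempty) (h : ∀ w ∈ S, k ≤ G.dist v w) :
    k ≤ setDist G v S := by
  obtain ⟨w, hw, hwv⟩ := Nat.sInf_mem (hS.image (G.dist v))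
  exact (h w hw).trans_eq hwv

theorem colorCode_apply_eq_ite {k : ℕ} {c : V → Fin k} (hG : G.Preconnected) {z : Fin k}
    (hz : ∃ u, (u = v ∨ G.Adj v u) ∧ c u = z) :
    colorCode G c v z = if c v = z then 0 else 1 := by
  obtain ⟨u, hu, huz⟩ := hz
  change setDist G v (c ⁻¹' {z}) = _
  split_ifs with hvz
  · exact Nat.le_zero.mp ((setDist_le_dist (w := v) hvz).trans_eq dist_self)
  · have hadj : G.Adj v u := hu.resolve_left (by rintro rfl; exact hvz huz)
    refine le_antisymm ((setDist_le_dist (show u ∈ c ⁻¹' {z} from huz)).trans_eq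
      (dist_eq_one_iff_adj.mpr hadj)) ?_
    refine le_setDist ⟨u, huz⟩ fun w hw => (hG v w).pos_dist_of_ne ?_
    rintro rfl
    exact hvz hw

end SetDist

section ProductWithPath

variable {m n : ℕ}

local notation "𝔾" => SimpleGraph.boxProd (⊤ : SimpleGraph (Fin m)) (pathGraph n)

theorem dist_top_boxProd_pathGraph (u v : Fin m × Fin n) :
    (𝔾).dist u v = Nat.dist u.2 v.2 + if u.1 = v.1 then 0 else 1 := by
  rw [dist_boxProd preconnected_top (pathGraph_preconnected n), dist_top, pathGraph_dist,
    add_comm]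

variable {c : Fin m × Fin n → Fin (m + 1)}

theorem fst_eq_of_color_eq (hprop : ∀ u v, (𝔾).Adj u v → c u ≠ c v) {u v : Fin m × Fin n}
    (h : c u = c v) (h₂ : u.2 = v.2) : u.1 = v.1 := by
  by_contra h₁
  exact hprop u v (boxProd_adj.mpr (.inl ⟨(top_adj _ _).mpr h₁, h₂⟩)) h

theorem exists_color_eq_of_missing (hprop : ∀ u v, (𝔾).Adj u v → c u ≠ c v) {a : Fin n}
    {x : Fin (m + 1)} (ha : ∀ i, c (i, a) ≠ x) {y : Fin (m + 1)} (hy : y ≠ x) :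
    ∃ i, c (i, a) = y := by
  let f : Fin m → {z // z ≠ x} := fun i => ⟨c (i, a), ha i⟩
  have hf : f.Injective := fun i i' h => fst_eq_of_color_eq hprop (congrArg Subtype.val h) rfl
  have hcard : Fintype.card (Fin m) = Fintype.card {z // z ≠ x} := by
    simp [Fintype.card_subtype_compl]
  obtain ⟨i, hi⟩ := ((Fintype.bijective_iff_injective_and_card f).mpr ⟨hf, hcard⟩).2 ⟨y, hy⟩
  exact ⟨i, congrArg Subtype.val hi⟩

theorem exists_closedNbhd_color_eq (hprop : ∀ u v, (𝔾).Adj u v → c u ≠ c v) {a : Fin n}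
    {x : Fin (m + 1)} (ha : ∀ i, c (i, a) ≠ x) (i : Fin m) {y : Fin (m + 1)} (hy : y ≠ x) :
    ∃ u, (u = (i, a) ∨ (𝔾).Adj (i, a) u) ∧ c u = y := by
  obtain ⟨i₀, hi₀⟩ := exists_color_eq_of_missing hprop ha hy
  refine ⟨(i₀, a), ?_, hi₀⟩
  by_cases h : i = i₀
  · exact .inl (by rw [h])
  · exact .inr (boxProd_adj.mpr (.inl ⟨(top_adj _ _).mpr h, rfl⟩))

theorem setDist_ne_of_color_eq (hc : IsLocatingColoring 𝔾 c) {x : Fin (m + 1)} {a a' : Fin n}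
    (ha : ∀ i, c (i, a) ≠ x) (ha' : ∀ i, c (i, a') ≠ x) (haa' : a ≠ a') {i i' : Fin m}
    (h : c (i, a) = c (i', a')) :
    setDist 𝔾 (i, a) (c ⁻¹' {x}) ≠ setDist 𝔾 (i', a') (c ⁻¹' {x}) := by
  intro hx
  have hG : (𝔾).Preconnected := preconnected_top.boxProd (pathGraph_preconnected n)
  refine haa' (congrArg Prod.snd (hc.2.2 (a₁ := (i, a)) (a₂ := (i', a')) (funext fun z => ?_)))
  by_cases hz : z = x
  · exact hz ▸ hx
  · rw [colorCode_apply_eq_ite hG (exists_closedNbhd_color_eq hc.2.1 ha i hz),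
      colorCode_apply_eq_ite hG (exists_closedNbhd_color_eq hc.2.1 ha' i' hz), h]

theorem setDist_eq_succ_of_nearest (hprop : ∀ u v, (𝔾).Adj u v → c u ≠ c v)
    {x : Fin (m + 1)} {a a' : Fin n} (haa' : Nat.dist a a' = 1) {w : Fin m × Fin n}
    (hw : c w = x)
    (hmin : ∀ w', c w' = x →
      Nat.dist a w.2 ≤ Nat.dist a w'.2 ∧ Nat.dist a w.2 ≤ Nat.dist a' w'.2)
    {i : Fin m} (hi : i ≠ w.1) :
    setDist 𝔾 (i, a) (c ⁻¹' {x}) = Nat.dist a w.2 + 1 := by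
  refine le_antisymm ?_ (le_setDist ⟨w, hw⟩ fun w' hw' => ?_)
  · calc setDist 𝔾 (i, a) (c ⁻¹' {x}) ≤ (𝔾).dist (i, a) w := setDist_le_dist hw
      _ = Nat.dist a w.2 + 1 := by rw [dist_top_boxProd_pathGraph, if_neg hi]
  rw [dist_top_boxProd_pathGraph]
  obtain ⟨h₁, h₂⟩ := hmin w' hw'
  dsimp only
  split_ifs with hrow
  · -- a second nearest vertex in row `i` would lie across column `a`, next to column `a'`
    have hcol : (w'.2 : ℕ) ≠ w.2 := fun h =>
      hi (hrow.trans (fst_eq_of_color_eq hprop (hw'.trans hw.symm) (Fin.ext h)))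
    have h₃ := (hmin w hw).2
    unfold Nat.dist at *
    omega
  · omega

theorem setDist_eq_succ_of_not_nearest {x : Fin (m + 1)} {a a' : Fin n}
    (haa' : Nat.dist a a' = 1) {w : Fin m × Fin n} (hw : c w = x)
    (hmin : ∀ w', c w' = x → Nat.dist a w.2 ≤ Nat.dist a' w'.2)
    (hnear : ∀ w₁, c w₁ = x → w₁.1 = w.1 → Nat.dist a' w₁.2 ≠ Nat.dist a w.2) :
    setDist 𝔾 (w.1, a') (c ⁻¹' {x}) = Nat.dist a w.2 + 1 := by
  refine le_antisymm ?_ (le_setDist ⟨w, hw⟩ fun w' hw' => ?_)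
  · calc setDist 𝔾 (w.1, a') (c ⁻¹' {x}) ≤ (𝔾).dist (w.1, a') w := setDist_le_dist hw
      _ ≤ Nat.dist a w.2 + 1 := by
        rw [dist_top_boxProd_pathGraph, if_pos rfl]
        dsimp only
        unfold Nat.dist at *
        omega
  rw [dist_top_boxProd_pathGraph]
  have h₁ := hmin w' hw'
  dsimp only
  split_ifs with hrow
  · have := hnear w' hw' hrow.symm
    omega
  · omega

theorem IsLocatingColoring.false_of_nearest (hc : IsLocatingColoring 𝔾 c) (hm : 3 ≤ m)
    {x : Fin (m + 1)} {a a' : Fin n} (ha : ∀ i, c (i, a) ≠ x) (ha' : ∀ i, c (i, a') ≠ x)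
    (haa' : Nat.dist a a' = 1) {w : Fin m × Fin n} (hw : c w = x)
    (hmin : ∀ w', c w' = x →
      Nat.dist a w.2 ≤ Nat.dist a w'.2 ∧ Nat.dist a w.2 ≤ Nat.dist a' w'.2) :
    False := by
  have hne : a ≠ a' := by rintro rfl; simp at haa'
  have hfa : ∀ i ≠ w.1, setDist 𝔾 (i, a) (c ⁻¹' {x}) = Nat.dist a w.2 + 1 :=
    fun i hi => setDist_eq_succ_of_nearest hc.2.1 haa' hw hmin hi
  by_cases hnear : ∃ w₁, c w₁ = x ∧ w₁.1 = w.1 ∧ Nat.dist a' w₁.2 = Nat.dist a w.2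
  · obtain ⟨w₁, hw₁, hrow, hd⟩ := hnear
    have hmin₁ : ∀ w', c w' = x →
        Nat.dist a' w₁.2 ≤ Nat.dist a' w'.2 ∧ Nat.dist a' w₁.2 ≤ Nat.dist a w'.2 :=
      fun w' hw' => hd ▸ (hmin w' hw').symm
    obtain ⟨y, -, hy⟩ := Finset.exists_mem_notMem_of_card_lt_card
      (s := {x, c (w.1, a), c (w.1, a')}) (t := Finset.univ)
      (by simpa using Finset.card_le_three.trans_lt (by omega : 3 < m + 1))
    simp only [Finset.mem_insert, Finset.mem_singleton, not_or] at hy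
    obtain ⟨hyx, hya, hya'⟩ := hy
    obtain ⟨i, hi⟩ := exists_color_eq_of_missing hc.2.1 ha hyx
    obtain ⟨i', hi'⟩ := exists_color_eq_of_missing hc.2.1 ha' hyx
    refine setDist_ne_of_color_eq hc ha ha' hne (hi.trans hi'.symm) ?_
    rw [hfa i (by rintro rfl; exact hya hi.symm), hd.symm,
      setDist_eq_succ_of_nearest hc.2.1 (Nat.dist_comm a a' ▸ haa') hw₁ hmin₁
        (by rw [hrow]; rintro rfl; exact hya' hi'.symm)]
  · simp only [not_exists, not_and] at hnear
    obtain ⟨i, hi⟩ := exists_color_eq_of_missing hc.2.1 ha (ha' w.1)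
    have hadj : (𝔾).Adj (w.1, a) (w.1, a') := boxProd_adj.mpr
      (.inr ⟨pathGraph_adj.mpr (by dsimp only; unfold Nat.dist at haa'; omega), rfl⟩)
    refine setDist_ne_of_color_eq hc ha ha' hne hi ?_
    rw [hfa i (by rintro rfl; exact hc.2.1 _ _ hadj hi),
      setDist_eq_succ_of_not_nearest haa' hw (fun w' hw' => (hmin w' hw').2) hnear]

end ProductWithPath

theorem stmt5_general (m n : ℕ) (hm : 3 ≤ m)
    (c : Fin m × Fin n → Fin (m + 1))
    (hc : IsLocatingColoring ((⊤ : SimpleGraph (Fin m)) □ pathGraph n) c)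
    (j j' : Fin n) (hj : (j' : ℕ) = (j : ℕ) + 1) :
    ¬ ∃ x : Fin (m + 1), (∀ i : Fin m, c (i, j) ≠ x) ∧ (∀ i : Fin m, c (i, j') ≠ x) := by
  rintro ⟨x, hxj, hxj'⟩
  have hjj' : Nat.dist j j' = 1 := by unfold Nat.dist; omega
  obtain ⟨w, hw, hmin | hmin⟩ := exists_min_left_or_right (c ⁻¹' {x}).toFinite (hc.1 x)
    (fun w => Nat.dist j w.2) (fun w => Nat.dist j' w.2)
  · exact hc.false_of_nearest hm hxj hxj' hjj' hw hmin
  · exact hc.false_of_nearest hm hxj' hxj (Nat.dist_comm j j' ▸ hjj') hw hmin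

/-- In any locating `(m+1)`-coloring of `K_m □ P_n` (`m ≥ 3`, `n ≥ 2`),
two consecutive columns have different missing colors: no color is absent from both
column `j` and column `j+1`. -/
theorem stmt5 (m n : ℕ) (hm : 3 ≤ m) (hn : 2 ≤ n)
    (c : Fin m × Fin n → Fin (m + 1))
    (hc : IsLocatingColoring ((⊤ : SimpleGraph (Fin m)) □ pathGraph n) c)
    (j j' : Fin n) (hj : (j' : ℕ) = (j : ℕ) + 1) :
    ¬ ∃ x : Fin (m + 1), (∀ i : Fin m, c (i, j) ≠ x) ∧ (∀ i : Fin m, c (i, j') ≠ x) :=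
  stmt5_general m n hm c hc j j' hj
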